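/- arXiv:1704.00103 — 2 statements merged into one kernel-verified Lean document; each statement's English description precedes it below -/
import Mathlib

section
/- Let I be a nonempty finite set of coordinate indices of ℝⁿ, let s ∈ ℝⁿ, and let ε_i > 0 for each i ∈ I. Then for every x ∈ ℝⁿ, the bar function satisfies the closed form b(x; I, s, ε) = max(0, 1 − Σ_{i∈I} |x_i − s_i|/ε_i). -/
/-- ReLU function: `relu v = max v 0`. -/
noncomputable def relu (v : ℝ) : ℝ := max v 0

/-- Basic bar function `φ(x; i, s, ε)` on `ℝⁿ`. -/
noncomputable def phi {n : ℕ} (x : Fin n → ℝ) (i : Fin n) (s ε : ℝ) : ℝ :=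
  (1 / ε) * (relu ((x i - s) + ε) - 2 * relu (x i - s) + relu ((x i - s) - ε))

/-- Bar function `b(x; I, s, ε) = ReLU(Σ_{i∈I} φ(x; i, s_i, ε_i) − #I + 1)`. -/
noncomputable def bar {n : ℕ} (x : Fin n → ℝ) (I : Finset (Fin n)) (s ε : Fin n → ℝ) : ℝ :=
  relu (∑ i ∈ I, phi x i (s i) (ε i) - (I.card : ℝ) + 1)

lemma hat_eq (t ε : ℝ) (hε : 0 < ε) :
    (1 / ε) * (max (t + ε) 0 - 2 * max t 0 + max (t - ε) 0) = max 0 (1 - |t| / ε) := by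
  have hε' : ε ≠ 0 := ne_of_gt hε
  rcases le_total t 0 with ht | ht
  · rw [abs_of_nonpos ht]
    rcases le_total (t + ε) 0 with h1 | h1
    · rw [max_eq_right h1, max_eq_right ht, max_eq_right (by linarith),
        max_eq_left (by rw [sub_nonpos, le_div_iff₀ hε]; linarith)]
      ring
    · rw [max_eq_left h1, max_eq_right ht, max_eq_right (by linarith),
        max_eq_right (by rw [sub_nonneg, div_le_one hε]; linarith)]
      field_simp
      ring
  · rw [abs_of_nonneg ht]
    rcases le_total (t - ε) 0 with h1 | h1
    · rw [max_eq_right h1, max_eq_left ht, max_eq_left (by linarith),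
        max_eq_right (by rw [sub_nonneg, div_le_one hε]; linarith)]
      field_simp
      ring
    · rw [max_eq_left h1, max_eq_left ht, max_eq_left (by linarith),
        max_eq_left (by rw [sub_nonpos, le_div_iff₀ hε]; linarith)]
      ring

lemma phi_eq {n : ℕ} (x : Fin n → ℝ) (i : Fin n) (s ε : ℝ) (hε : 0 < ε) :
    phi x i s ε = max 0 (1 - |x i - s| / ε) := by
  unfold phi relu
  exact hat_eq (x i - s) ε hε

/-- Closed form of the bar function:
`b(x; I, s, ε) = max 0 (1 - Σ_{i∈I} |x_i - s_i| / ε_i)` for nonempty `I` and positive widths. -/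
theorem bar_closed_form {n : ℕ} (I : Finset (Fin n)) (hI : I.Nonempty)
    (s ε : Fin n → ℝ) (hε : ∀ i ∈ I, 0 < ε i) (x : Fin n → ℝ) :
    bar x I s ε = max 0 (1 - ∑ i ∈ I, |x i - s i| / ε i) := by
  unfold bar relu
  rw [Finset.sum_congr rfl (fun i hi => phi_eq x i (s i) (ε i) (hε i hi))]
  by_cases hall : ∀ i ∈ I, |x i - s i| / ε i ≤ 1
  · have : ∀ i ∈ I, max 0 (1 - |x i - s i| / ε i) = 1 - |x i - s i| / ε i := fun i hi =>
      max_eq_right (by linarith [hall i hi])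
    rw [Finset.sum_congr rfl this, Finset.sum_sub_distrib, Finset.sum_const, nsmul_eq_mul,
      mul_one, max_comm]
    congr 1
    ring
  · push_neg at hall
    obtain ⟨j, hj, hj1⟩ := hall
    have hε' : ∀ i ∈ I, 0 ≤ |x i - s i| / ε i := fun i hi =>
      div_nonneg (abs_nonneg _) (hε i hi).le
    have h1 : ∑ i ∈ I, max 0 (1 - |x i - s i| / ε i) - (I.card : ℝ) + 1 ≤ 0 := by
      have hsplit : max 0 (1 - |x j - s j| / ε j)
          + ∑ i ∈ I.erase j, max 0 (1 - |x i - s i| / ε i)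
          = ∑ i ∈ I, max 0 (1 - |x i - s i| / ε i) :=
        Finset.add_sum_erase I (fun i => max 0 (1 - |x i - s i| / ε i)) hj
      have hjz : max 0 (1 - |x j - s j| / ε j) = 0 := max_eq_left (by linarith)
      have hbd : ∑ i ∈ I.erase j, max 0 (1 - |x i - s i| / ε i)
          ≤ (I.erase j).card • (1 : ℝ) := by
        apply Finset.sum_le_card_nsmul
        intro i hi
        exact max_le one_pos.le (by linarith [hε' i (Finset.mem_of_mem_erase hi)])
      rw [Finset.card_erase_of_mem hj] at hbd
      have hcard : 1 ≤ I.card := Finset.one_le_card.mpr hI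
      rw [nsmul_eq_mul, mul_one] at hbd
      have : ((I.card - 1 : ℕ) : ℝ) = (I.card : ℝ) - 1 := by
        push_cast [hcard]; ring
      rw [this] at hbd
      linarith
    have h2 : 1 - ∑ i ∈ I, |x i - s i| / ε i ≤ 0 := by
      have hge := Finset.single_le_sum hε' hj
      linarith
    rw [max_eq_right h1, max_eq_left h2]
end

section
/- Let I be a nonempty finite set of coordinate indices of ℝⁿ, let s ∈ ℝⁿ, and let ε_i > 0 for each i ∈ I. Then for every x ∈ ℝⁿ, 0 ≤ b(x; I, s, ε) ≤ 1, and b(x; I, s, ε) = 1 if and only if x_i = s_i for all i ∈ I. -/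
lemma tent_bounds (ε t : ℝ) (hε : 0 < ε) :
    0 ≤ max (t+ε) 0 - 2*max t 0 + max (t-ε) 0 ∧
    max (t+ε) 0 - 2*max t 0 + max (t-ε) 0 ≤ ε ∧
    (max (t+ε) 0 - 2*max t 0 + max (t-ε) 0 = ε ↔ t = 0) := by
  rcases max_cases (t+ε) 0 with ⟨h1,h1'⟩|⟨h1,h1'⟩ <;>
  rcases max_cases t 0 with ⟨h2,h2'⟩|⟨h2,h2'⟩ <;>
  rcases max_cases (t-ε) 0 with ⟨h3,h3'⟩|⟨h3,h3'⟩ <;>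
  refine ⟨by linarith, by linarith, ?_, ?_⟩ <;> intro h <;> linarith

lemma phi_props {n : ℕ} (x : Fin n → ℝ) (i : Fin n) (s ε : ℝ) (hε : 0 < ε) :
    0 ≤ phi x i s ε ∧ phi x i s ε ≤ 1 ∧ (phi x i s ε = 1 ↔ x i = s) := by
  obtain ⟨h0, h1, h2⟩ := tent_bounds ε (x i - s) hε
  have hne : ε ≠ 0 := ne_of_gt hε
  unfold phi relu
  rw [one_div, inv_mul_eq_div]
  refine ⟨div_nonneg h0 hε.le, (div_le_one hε).mpr h1, ?_⟩
  rw [div_eq_one_iff_eq hne, h2, sub_eq_zero]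

/-- `0 ≤ b(x; I, s, ε) ≤ 1`, and `b(x; I, s, ε) = 1 ↔ x_i = s_i` for all `i ∈ I`. -/
theorem bar_bounds_and_peak {n : ℕ} (I : Finset (Fin n)) (hI : I.Nonempty)
    (s ε : Fin n → ℝ) (hε : ∀ i ∈ I, 0 < ε i) (x : Fin n → ℝ) :
    (0 ≤ bar x I s ε ∧ bar x I s ε ≤ 1) ∧ (bar x I s ε = 1 ↔ ∀ i ∈ I, x i = s i) := by
  have hle : ∀ i ∈ I, phi x i (s i) (ε i) ≤ 1 := fun i hi =>
    (phi_props x i (s i) (ε i) (hε i hi)).2.1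
  have hsum : ∑ i ∈ I, phi x i (s i) (ε i) ≤ (I.card : ℝ) := by
    calc ∑ i ∈ I, phi x i (s i) (ε i) ≤ ∑ _i ∈ I, (1 : ℝ) := Finset.sum_le_sum hle
    _ = (I.card : ℝ) := by simp
  have hsum_iff : ∑ i ∈ I, phi x i (s i) (ε i) = (I.card : ℝ) ↔
      ∀ i ∈ I, phi x i (s i) (ε i) = 1 := by
    have := Finset.sum_eq_sum_iff_of_le hle
    constructor
    · intro h; exact this.mp (by simpa using h)
    · intro h
      rw [Finset.sum_congr rfl h]; simp
  constructor
  · constructor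
    · exact le_max_right _ _
    · exact max_le (by linarith) (by norm_num)
  · unfold bar relu
    constructor
    · intro h i hi
      have harg : ∑ i ∈ I, phi x i (s i) (ε i) - (I.card : ℝ) + 1 = 1 := by
        rcases max_cases (∑ i ∈ I, phi x i (s i) (ε i) - (I.card : ℝ) + 1) 0 with
          ⟨he, _⟩ | ⟨he, _⟩ <;> rw [he] at h <;> linarith
      have := (hsum_iff.mp (by linarith)) i hi
      exact (phi_props x i (s i) (ε i) (hε i hi)).2.2.mp this
    · intro h
      have : ∑ i ∈ I, phi x i (s i) (ε i) = (I.card : ℝ) := hsum_iff.mpr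
        (fun i hi => (phi_props x i (s i) (ε i) (hε i hi)).2.2.mpr (h i hi))
      rw [this]; simp
end
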